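/- For the stochastic proximal gradient iterates with step size η = c/L, 0 < c < 1/2: ((1 - 2ηL)/(2η)) Σ_{t=0}^{T-1} ‖x_{t+1} - x_t‖² ≤ Δ + (1/(2L)) Σ_{t=0}^{T-1} ‖g_t - ∇f(x_t)‖². -/

import Mathlib

/-!
Comparing `x_{t+1}` with `x_t` in the proximal model, adding the descent lemma for `f` and
bounding the gradient error `⟪∇f(x_t) - g_t, x_{t+1} - x_t⟫` by Young's inequality gives the
per-step inequality. Summing it telescopes `F(x_t)`, and `F(x_0) - F(x_T) ≤ Δ` because `x_*`
minimizes `F`.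
-/

open RealInnerProductSpace

section Descent

variable {E : Type*} [NormedAddCommGroup E] [InnerProductSpace ℝ E]
  {f : E → ℝ} {f' : E → E} {L : ℝ}

theorem hasDerivAt_comp_add_smul [CompleteSpace E] (hdiff : ∀ x, HasGradientAt f (f' x) x)
    (x v : E) (s : ℝ) :
    HasDerivAt (fun s : ℝ => f (x + s • v)) ⟪f' (x + s • v), v⟫ s := by
  have hline : HasDerivAt (fun s : ℝ => x + s • v) v s := by
    simpa using ((hasDerivAt_id s).smul_const v).const_add x
  simpa only [Function.comp_def, InnerProductSpace.toDual_apply_apply] using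
    (hdiff (x + s • v)).hasFDerivAt.comp_hasDerivAt s hline

theorem inner_gradient_sub_le (hlip : ∀ x y, ‖f' x - f' y‖ ≤ L * ‖x - y‖) (x v : E) {s : ℝ}
    (hs : 0 ≤ s) : ⟪f' (x + s • v) - f' x, v⟫ ≤ L * s * ‖v‖ ^ 2 :=
  calc ⟪f' (x + s • v) - f' x, v⟫ ≤ ‖f' (x + s • v) - f' x‖ * ‖v‖ := real_inner_le_norm _ _
    _ ≤ L * ‖(x + s • v) - x‖ * ‖v‖ := by gcongr; exact hlip _ _
    _ = L * s * ‖v‖ ^ 2 := by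
      rw [add_sub_cancel_left, norm_smul, Real.norm_of_nonneg hs]; ring

theorem le_add_inner_add_sq_of_lipschitz_gradient [CompleteSpace E]
    (hdiff : ∀ x, HasGradientAt f (f' x) x)
    (hlip : ∀ x y, ‖f' x - f' y‖ ≤ L * ‖x - y‖) (x y : E) :
    f y ≤ f x + ⟪f' x, y - x⟫ + L / 2 * ‖y - x‖ ^ 2 := by
  set v := y - x
  set h : ℝ → ℝ := fun s => f (x + s • v) - s * ⟪f' x, v⟫ - L / 2 * s ^ 2 * ‖v‖ ^ 2
  have hderiv : ∀ s : ℝ, HasDerivAt h (⟪f' (x + s • v) - f' x, v⟫ - L * s * ‖v‖ ^ 2) s := by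
    intro s
    have hlin := (hasDerivAt_id s).mul_const ⟪f' x, v⟫
    have hquad := ((hasDerivAt_pow 2 s).const_mul (L / 2)).mul_const (‖v‖ ^ 2)
    refine (((hasDerivAt_comp_add_smul hdiff x v s).sub hlin).sub hquad).congr_deriv ?_
    rw [inner_sub_left]; push_cast; ring
  have hanti : AntitoneOn h (Set.Icc 0 1) := by
    refine antitoneOn_of_deriv_nonpos (convex_Icc 0 1)
      (HasDerivAt.continuousOn fun s _ => hderiv s)
      (fun s _ => (hderiv s).differentiableAt.differentiableWithinAt) fun s hs => ?_
    rw [interior_Icc] at hs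
    rw [(hderiv s).deriv, sub_nonpos]
    exact inner_gradient_sub_le hlip x v hs.1.le
  have h10 := hanti (Set.left_mem_Icc.2 zero_le_one) (Set.right_mem_Icc.2 zero_le_one) zero_le_one
  simp only [h, one_smul, zero_smul, add_zero, one_pow, add_sub_cancel, v] at h10
  linarith

theorem inner_le_sq_div_add_sq_mul {u v : E} (hL : 0 < L) :
    ⟪u, v⟫ ≤ 1 / (2 * L) * ‖u‖ ^ 2 + L / 2 * ‖v‖ ^ 2 := by
  have hyoung : 2 * L * (‖u‖ * ‖v‖) ≤ ‖u‖ ^ 2 + L ^ 2 * ‖v‖ ^ 2 := by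
    nlinarith [sq_nonneg (‖u‖ - L * ‖v‖)]
  calc ⟪u, v⟫ ≤ ‖u‖ * ‖v‖ := real_inner_le_norm u v
    _ ≤ (‖u‖ ^ 2 + L ^ 2 * ‖v‖ ^ 2) / (2 * L) := by
      rw [le_div_iff₀ (by positivity)]; linarith
    _ = 1 / (2 * L) * ‖u‖ ^ 2 + L / 2 * ‖v‖ ^ 2 := by field_simp

theorem prox_step_descent [CompleteSpace E] {r : E → ℝ} {η : ℝ} (hL : 0 < L)
    (hdiff : ∀ x, HasGradientAt f (f' x) x) (hlip : ∀ x y, ‖f' x - f' y‖ ≤ L * ‖x - y‖)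
    {x₀ x₁ g : E} (hmodel : r x₁ + ⟪g, x₁ - x₀⟫ + 1 / (2 * η) * ‖x₁ - x₀‖ ^ 2 ≤ r x₀) :
    (1 / (2 * η) - L) * ‖x₁ - x₀‖ ^ 2 ≤
      (f x₀ + r x₀) - (f x₁ + r x₁) + 1 / (2 * L) * ‖g - f' x₀‖ ^ 2 := by
  have hdescent := le_add_inner_add_sq_of_lipschitz_gradient hdiff hlip x₀ x₁
  have hyoung := inner_le_sq_div_add_sq_mul (u := g - f' x₀) (v := x₀ - x₁) hL
  rw [inner_sub_left, inner_sub_right, inner_sub_right, norm_sub_rev x₀] at hyoung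
  rw [inner_sub_right] at hmodel hdescent
  linarith

end Descent

open Finset

theorem spg_telescoped_bound_general {d : ℕ} (f r : EuclideanSpace ℝ (Fin d) → ℝ)
    (f' : EuclideanSpace ℝ (Fin d) → EuclideanSpace ℝ (Fin d)) (L c η Δ : ℝ) (hL : 0 < L)
    (hc : 0 < c) (hηdef : η = c / L)
    (hdiff : ∀ x, HasGradientAt f (f' x) x)
    (hlip : ∀ x y, ‖f' x - f' y‖ ≤ L * ‖x - y‖)
    (x g : ℕ → EuclideanSpace ℝ (Fin d))
    (hmin : ∀ t, ∀ y, r (x (t + 1)) + ⟪g t, x (t + 1) - x t⟫ +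
        1 / (2 * η) * ‖x (t + 1) - x t‖ ^ 2 ≤
      r y + ⟪g t, y - x t⟫ + 1 / (2 * η) * ‖y - x t‖ ^ 2)
    (xstar : EuclideanSpace ℝ (Fin d))
    (hstar : ∀ y, f xstar + r xstar ≤ f y + r y)
    (hΔ : (f (x 0) + r (x 0)) - (f xstar + r xstar) ≤ Δ) (T : ℕ) :
    (1 - 2 * η * L) / (2 * η) * ∑ t ∈ range T, ‖x (t + 1) - x t‖ ^ 2 ≤
      Δ + 1 / (2 * L) * ∑ t ∈ range T, ‖g t - f' (x t)‖ ^ 2 := by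
  set F : ℕ → ℝ := fun t => f (x t) + r (x t)
  have hstep : ∀ t, (1 / (2 * η) - L) * ‖x (t + 1) - x t‖ ^ 2 ≤
      F t - F (t + 1) + 1 / (2 * L) * ‖g t - f' (x t)‖ ^ 2 := fun t =>
    prox_step_descent hL hdiff hlip (by simpa using hmin t (x t))
  have hcoef : (1 - 2 * η * L) / (2 * η) = 1 / (2 * η) - L := by
    have : η ≠ 0 := (hηdef ▸ div_pos hc hL).ne'
    field_simp
  have hgap : F 0 - F T ≤ Δ := by linarith [hstar (x T)]
  rw [hcoef, mul_sum, mul_sum]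
  calc ∑ t ∈ range T, (1 / (2 * η) - L) * ‖x (t + 1) - x t‖ ^ 2
      ≤ ∑ t ∈ range T, (F t - F (t + 1) + 1 / (2 * L) * ‖g t - f' (x t)‖ ^ 2) :=
        sum_le_sum fun t _ => hstep t
    _ = F 0 - F T + ∑ t ∈ range T, 1 / (2 * L) * ‖g t - f' (x t)‖ ^ 2 := by
        rw [sum_add_distrib, sum_range_sub']
    _ ≤ _ := by linarith

/-- Telescoped bound for stochastic proximal gradient with `η = c/L`, `0 < c < 1/2`:
`((1-2ηL)/(2η)) Σ_{t<T} ‖x_{t+1}-x_t‖² ≤ Δ + (1/(2L)) Σ_{t<T} ‖g_t - ∇f(x_t)‖²`. -/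
theorem spg_telescoped_bound {d : ℕ} (f r : EuclideanSpace ℝ (Fin d) → ℝ)
    (f' : EuclideanSpace ℝ (Fin d) → EuclideanSpace ℝ (Fin d)) (L c η Δ : ℝ) (hL : 0 < L)
    (hc : 0 < c) (hc2 : c < 1 / 2) (hηdef : η = c / L)
    (hdiff : ∀ x, HasGradientAt f (f' x) x)
    (hlip : ∀ x y, ‖f' x - f' y‖ ≤ L * ‖x - y‖)
    (x g : ℕ → EuclideanSpace ℝ (Fin d))
    (hmin : ∀ t, ∀ y, r (x (t + 1)) + ⟪g t, x (t + 1) - x t⟫ +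
        1 / (2 * η) * ‖x (t + 1) - x t‖ ^ 2 ≤
      r y + ⟪g t, y - x t⟫ + 1 / (2 * η) * ‖y - x t‖ ^ 2)
    (xstar : EuclideanSpace ℝ (Fin d))
    (hstar : ∀ y, f xstar + r xstar ≤ f y + r y)
    (hΔ : (f (x 0) + r (x 0)) - (f xstar + r xstar) ≤ Δ) (T : ℕ) :
    (1 - 2 * η * L) / (2 * η) * ∑ t ∈ range T, ‖x (t + 1) - x t‖ ^ 2 ≤
      Δ + 1 / (2 * L) * ∑ t ∈ range T, ‖g t - f' (x t)‖ ^ 2 :=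
  spg_telescoped_bound_general f r f' L c η Δ hL hc hηdef hdiff hlip x g hmin xstar hstar hΔ T
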